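/- Breiman-type lemma (simplified independent case): if φ and χ are independent nonnegative random variables with P(φ > x) ~ c·x^{−κ} as x → ∞ and E[χ^{κ+ε}] < ∞ for some ε > 0, then P(φχ > x) ~ c·E[χ^κ]·x^{−κ} as x → ∞. -/

import Mathlib

open MeasureTheory ProbabilityTheory Filter

/-- Breiman's lemma (independent case). If `φ` and `χ` are independent
nonnegative random variables with `P(φ > x)·x^κ → c > 0` as `x → ∞` and
`E[χ^{κ+ε}] < ∞` for some `ε > 0`, then `P(φχ > x)·x^κ → c·E[χ^κ]`. -/
theorem breiman_lemma_independent
    {Ω : Type*} [MeasurableSpace Ω] (μ : Measure Ω) [IsProbabilityMeasure μ]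
    (φ χ : Ω → ℝ) (hφ : Measurable φ) (hχ : Measurable χ)
    (hφ_nonneg : ∀ ω, 0 ≤ φ ω) (hχ_nonneg : ∀ ω, 0 ≤ χ ω)
    (hindep : IndepFun φ χ μ)
    (c κ : ℝ) (hc : 0 < c) (hκ : 0 < κ)
    (htail : Filter.Tendsto (fun x : ℝ => (μ {ω | x < φ ω}).toReal * x ^ κ)
      Filter.atTop (nhds c))
    (ε : ℝ) (hε : 0 < ε)
    (hmom : Integrable (fun ω => χ ω ^ (κ + ε)) μ) :
    Filter.Tendsto (fun x : ℝ => (μ {ω | x < φ ω * χ ω}).toReal * x ^ κ)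
      Filter.atTop (nhds (c * ∫ ω, χ ω ^ κ ∂μ)) := by
  set ρ := μ.map φ with hρdef
  set ν := μ.map χ with hνdef
  haveI : IsProbabilityMeasure ρ := Measure.isProbabilityMeasure_map hφ.aemeasurable
  haveI : IsProbabilityMeasure ν := Measure.isProbabilityMeasure_map hχ.aemeasurable
  have hmap : μ.map (fun ω => (φ ω, χ ω)) = ρ.prod ν :=
    (ProbabilityTheory.indepFun_iff_map_prod_eq_prod_map_map hφ.aemeasurable
      hχ.aemeasurable).1 hindep
  have hSmeas : ∀ x : ℝ, MeasurableSet {p : ℝ × ℝ | x < p.1 * p.2} := fun x =>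
    measurableSet_lt measurable_const (measurable_fst.mul measurable_snd)
  -- h x t = ρ {a | x < a * t}
  set h : ℝ → ℝ → ENNReal := fun x t => ρ {a | x < a * t} with hdef
  have hhmeas : ∀ x, Measurable (h x) := by
    intro x
    have := measurable_measure_prodMk_right (μ := ρ) (hSmeas x)
    exact this
  have hhlt : ∀ x, ∀ᵐ t ∂ν, h x t < ⊤ := fun x =>
    Filter.Eventually.of_forall (fun t => lt_of_le_of_lt prob_le_one (by norm_num))
  -- key identity
  have hkey : ∀ x : ℝ, μ {ω | x < φ ω * χ ω} = ∫⁻ t, h x t ∂ν := by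
    intro x
    have h1 : μ {ω | x < φ ω * χ ω}
        = μ.map (fun ω => (φ ω, χ ω)) {p : ℝ × ℝ | x < p.1 * p.2} := by
      rw [Measure.map_apply (hφ.prodMk hχ) (hSmeas x)]
      rfl
    rw [h1, hmap, Measure.prod_apply_symm (hSmeas x)]
    rfl
  have hmapφ : ∀ y : ℝ, ρ {a | y < a} = μ {ω | y < φ ω} := by
    intro y
    rw [hρdef]
    rw [show {a : ℝ | y < a} = Set.Ioi y from rfl, Measure.map_apply hφ measurableSet_Ioi]
    rfl
  -- integrability of χ^κ
  have hmχκ : Measurable fun ω => χ ω ^ κ := hχ.pow measurable_const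
  have hint_pow : Integrable (fun ω => χ ω ^ κ) μ := by
    have hbig : Integrable (fun ω => 1 + χ ω ^ (κ + ε)) μ := (integrable_const 1).add hmom
    refine hbig.mono hmχκ.aestronglyMeasurable (Filter.Eventually.of_forall fun ω => ?_)
    have h0 : (0:ℝ) ≤ χ ω := hχ_nonneg ω
    have h0' : (0:ℝ) ≤ χ ω ^ (κ + ε) := Real.rpow_nonneg h0 _
    rw [Real.norm_of_nonneg (Real.rpow_nonneg h0 _), Real.norm_of_nonneg (by linarith)]
    rcases le_total (χ ω) 1 with h1 | h1
    · have := Real.rpow_le_one h0 h1 hκ.le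
      linarith
    · have := Real.rpow_le_rpow_of_exponent_le h1 (by linarith : κ ≤ κ + ε)
      linarith
  -- ν-a.e. nonneg
  have hν_nonneg : ∀ᵐ t ∂ν, 0 ≤ t := by
    rw [hνdef]
    exact (ae_map_iff hχ.aemeasurable measurableSet_Ici).2
      (Filter.Eventually.of_forall hχ_nonneg)
  -- the real integrand
  set F : ℝ → ℝ → ℝ := fun x t => (h x t).toReal * x ^ κ with hFdef
  -- pointwise limit
  have hG : ∀ t : ℝ, 0 < t →
      Tendsto (fun x => F x t) atTop (nhds (c * t ^ κ)) := by
    intro t ht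
    have hdiv : Tendsto (fun x : ℝ => x / t) atTop atTop :=
      Tendsto.atTop_div_const ht tendsto_id
    have h2 : Tendsto (fun x : ℝ => (μ {ω | x / t < φ ω}).toReal * (x / t) ^ κ * t ^ κ)
        atTop (nhds (c * t ^ κ)) := (htail.comp hdiv).mul_const _
    refine h2.congr' ?_
    filter_upwards [eventually_gt_atTop (0:ℝ)] with x hx
    have hset : {a : ℝ | x < a * t} = {a : ℝ | x / t < a} := by
      ext a; simp only [Set.mem_setOf_eq, div_lt_iff₀ ht]
    have hht : h x t = μ {ω | x / t < φ ω} := by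
      rw [hdef]
      simp only []
      rw [hset, hmapφ]
    have hxκ : (x / t) ^ κ * t ^ κ = x ^ κ := by
      rw [← Real.mul_rpow (by positivity) ht.le, div_mul_cancel₀]
      exact ht.ne'
    rw [hFdef]
    simp only []
    rw [hht, mul_assoc, hxκ]
  -- choose A
  obtain ⟨A₀, hA₀⟩ := (Filter.eventually_atTop).1
    (htail.eventually (eventually_le_nhds (lt_add_one c)))
  set A : ℝ := max A₀ 1 with hAdef
  have hA1 : (1:ℝ) ≤ A := le_max_right _ _
  have hApos : (0:ℝ) < A := lt_of_lt_of_le one_pos hA1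
  have hAbound : ∀ y : ℝ, A ≤ y → (μ {ω | y < φ ω}).toReal * y ^ κ ≤ c + 1 :=
    fun y hy => hA₀ y (le_trans (le_max_left _ _) hy)
  set M : ℝ := (c + 1) + A ^ κ with hMdef
  have hbound : ∀ᶠ x in atTop, ∀ᵐ t ∂ν, ‖F x t‖ ≤ M * t ^ κ := by
    filter_upwards [eventually_ge_atTop (1:ℝ)] with x hx
    filter_upwards [hν_nonneg] with t ht
    have hxpos : (0:ℝ) < x := lt_of_lt_of_le one_pos hx
    rcases eq_or_lt_of_le ht with rfl | htpos
    · -- t = 0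
      have hempty : {a : ℝ | x < a * (0:ℝ)} = (∅ : Set ℝ) := by
        ext a; simp [not_lt.2 hxpos.le]
      have hh0 : h x 0 = 0 := by
        rw [hdef]; simp only []
        rw [hempty, measure_empty]
      rw [hFdef]; simp only []
      rw [hh0]
      simp [Real.zero_rpow hκ.ne']
    · have hFnn : 0 ≤ F x t := by
        rw [hFdef]
        exact mul_nonneg ENNReal.toReal_nonneg (Real.rpow_nonneg hxpos.le _)
      rw [Real.norm_of_nonneg hFnn]
      have hset : {a : ℝ | x < a * t} = {a : ℝ | x / t < a} := by
        ext a; simp only [Set.mem_setOf_eq, div_lt_iff₀ htpos]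
      have hht : h x t = μ {ω | x / t < φ ω} := by
        rw [hdef]; simp only []
        rw [hset, hmapφ]
      have htκ : (0:ℝ) ≤ t ^ κ := Real.rpow_nonneg htpos.le _
      rcases le_total A (x / t) with hcase | hcase
      · -- x/t ≥ A
        have hxκ : (x / t) ^ κ * t ^ κ = x ^ κ := by
          rw [← Real.mul_rpow (by positivity) htpos.le, div_mul_cancel₀]
          exact htpos.ne'
        have : F x t = ((μ {ω | x / t < φ ω}).toReal * (x / t) ^ κ) * t ^ κ := by
          rw [hFdef]; simp only []
          rw [hht, mul_assoc, hxκ]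
        rw [this]
        have := hAbound _ hcase
        have hM1 : (c + 1) * t ^ κ ≤ M * t ^ κ := by
          apply mul_le_mul_of_nonneg_right _ htκ
          rw [hMdef]
          nlinarith [Real.rpow_nonneg hApos.le κ]
        calc (μ {ω | x / t < φ ω}).toReal * (x / t) ^ κ * t ^ κ
            ≤ (c + 1) * t ^ κ := mul_le_mul_of_nonneg_right this htκ
          _ ≤ M * t ^ κ := hM1
      · -- x/t < A, so x ≤ A * t
        have hxAt : x ≤ A * t := by
          rw [div_le_iff₀ htpos] at hcase
          linarith
        have hxκ : x ^ κ ≤ A ^ κ * t ^ κ := by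
          rw [← Real.mul_rpow hApos.le htpos.le]
          exact Real.rpow_le_rpow hxpos.le hxAt hκ.le
        have hG1 : (h x t).toReal ≤ 1 := by
          rw [hht]
          exact ENNReal.toReal_le_of_le_ofReal one_pos.le (by simpa using prob_le_one)
        calc F x t ≤ 1 * x ^ κ := by
              rw [hFdef]
              exact mul_le_mul_of_nonneg_right hG1 (Real.rpow_nonneg hxpos.le _)
          _ = x ^ κ := one_mul _
          _ ≤ A ^ κ * t ^ κ := hxκ
          _ ≤ M * t ^ κ := by
              apply mul_le_mul_of_nonneg_right _ htκ
              rw [hMdef]; linarith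
  -- dominated convergence
  have hbound_int : Integrable (fun t => M * t ^ κ) ν := by
    have hsm : AEStronglyMeasurable (fun t : ℝ => t ^ κ) ν :=
      (show Measurable fun t : ℝ => t ^ κ from measurable_id.pow measurable_const).aestronglyMeasurable
    have : Integrable (fun t : ℝ => t ^ κ) ν := by
      rw [hνdef] at hsm ⊢
      rw [integrable_map_measure hsm hχ.aemeasurable]
      exact hint_pow
    exact this.const_mul M
  have hFmeas : ∀ᶠ x in atTop, AEStronglyMeasurable (F x) ν :=
    Filter.Eventually.of_forall fun x =>
      (((hhmeas x).ennreal_toReal).mul_const _).aestronglyMeasurable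
  have hlim : ∀ᵐ t ∂ν, Tendsto (fun x => F x t) atTop (nhds (c * t ^ κ)) := by
    filter_upwards [hν_nonneg] with t ht
    rcases eq_or_lt_of_le ht with rfl | htpos
    · -- t = 0
      have hev : ∀ᶠ x in atTop, F x (0:ℝ) = 0 := by
        filter_upwards [eventually_gt_atTop (0:ℝ)] with x hx
        have hempty : {a : ℝ | x < a * (0:ℝ)} = (∅ : Set ℝ) := by
          ext a; simp [not_lt.2 hx.le]
        have hh0 : h x 0 = 0 := by
          rw [hdef]; simp only []
          rw [hempty, measure_empty]
        rw [hFdef]; simp only []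
        rw [hh0]; simp
      have h0 : c * (0:ℝ) ^ κ = 0 := by
        rw [Real.zero_rpow hκ.ne', mul_zero]
      rw [h0]
      exact Tendsto.congr' (hev.mono fun x hx => hx.symm) tendsto_const_nhds
    · exact hG t htpos
  have hDC : Tendsto (fun x => ∫ t, F x t ∂ν) atTop (nhds (∫ t, c * t ^ κ ∂ν)) :=
    tendsto_integral_filter_of_dominated_convergence (fun t => M * t ^ κ)
      hFmeas hbound hbound_int hlim
  -- identify the limit
  have hlimval : ∫ t, c * t ^ κ ∂ν = c * ∫ ω, χ ω ^ κ ∂μ := by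
    have hsm : AEStronglyMeasurable (fun t : ℝ => t ^ κ) (μ.map χ) :=
      (show Measurable fun t : ℝ => t ^ κ from measurable_id.pow measurable_const).aestronglyMeasurable
    rw [integral_const_mul, hνdef, integral_map hχ.aemeasurable hsm]
  rw [← hlimval]
  refine hDC.congr' ?_
  filter_upwards [eventually_gt_atTop (0:ℝ)] with x hx
  have h1 : ∫ t, F x t ∂ν = (∫ t, (h x t).toReal ∂ν) * x ^ κ := by
    rw [hFdef]
    exact integral_mul_const _ _
  rw [h1, integral_toReal (hhmeas x).aemeasurable (hhlt x), ← hkey x]
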